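/- For the conjugate Normal model, the prequential Hyvärinen score H_T converges to a finite limit as σ₀ → +∞; specifically each term H(y_t, N(μ_{t-1}, σ_{t-1}² + 1)) converges to H(y_t, N(m_{t-1}, 1/(t-1) + 1)) for t ≥ 2 where m_{t-1} is the sample mean of y_1,...,y_{t-1}. -/
import Mathlib


open Real Filter Finset

/-- Hyvärinen score of the `N(m,v)` density at `z`: `-2/v + (z-m)²/v²`. -/
noncomputable def hyvGauss (m v z : ℝ) : ℝ := -2 / v + (z - m) ^ 2 / v ^ 2

/-- Posterior variance `σ_t² = (t + σ₀⁻²)⁻¹` in the conjugate Normal model. -/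
noncomputable def postVar (σ0 : ℝ) (t : ℕ) : ℝ := ((t : ℝ) + (σ0 ^ 2)⁻¹)⁻¹

/-- Posterior mean `μ_t = σ_t² ∑_{i=1}^t y_i` in the conjugate Normal model. -/
noncomputable def postMean (y : ℕ → ℝ) (σ0 : ℝ) (t : ℕ) : ℝ :=
  postVar σ0 t * ∑ i ∈ Finset.range t, y i

/-- Hyvärinen score of the time-`t` predictive `N(μ_{t-1}, σ_{t-1}² + 1)` at `y_t`
(observations are indexed from 0, so `y_t` is `y (t-1)`). -/
noncomputable def preqTerm (y : ℕ → ℝ) (σ0 : ℝ) (t : ℕ) : ℝ :=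
  hyvGauss (postMean y σ0 (t - 1)) (postVar σ0 (t - 1) + 1) (y (t - 1))


lemma sq_atTop : Tendsto (fun σ0 : ℝ => σ0 ^ 2) atTop atTop :=
  tendsto_pow_atTop two_ne_zero

lemma inv_sq_tendsto : Tendsto (fun σ0 : ℝ => (σ0 ^ 2)⁻¹) atTop (nhds 0) :=
  sq_atTop.inv_tendsto_atTop

lemma tendsto_main (y : ℕ → ℝ) (t : ℕ) (ht : 1 ≤ t) :
    Tendsto (fun σ0 : ℝ => preqTerm y σ0 (t + 1)) atTop
      (nhds (hyvGauss ((∑ i ∈ Finset.range t, y i) / (t : ℝ)) (1 / (t : ℝ) + 1) (y t))) := by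
  have hne : (t : ℝ) ≠ 0 := Nat.cast_ne_zero.mpr (by omega)
  have hpv : Tendsto (fun σ0 : ℝ => postVar σ0 t) atTop (nhds (t : ℝ)⁻¹) := by
    simpa [postVar] using
      (tendsto_const_nhds.add inv_sq_tendsto).inv₀ (by rw [add_zero]; exact hne)
  have hpm : Tendsto (fun σ0 : ℝ => postMean y σ0 t) atTop
      (nhds ((t : ℝ)⁻¹ * ∑ i ∈ Finset.range t, y i)) := by
    simpa [postMean] using hpv.mul tendsto_const_nhds
  have hv : Tendsto (fun σ0 : ℝ => postVar σ0 t + 1) atTop (nhds ((t : ℝ)⁻¹ + 1)) :=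
    hpv.add tendsto_const_nhds
  have hvne : (t : ℝ)⁻¹ + 1 ≠ 0 := by positivity
  have h1 : Tendsto (fun σ0 : ℝ => -2 / (postVar σ0 t + 1)) atTop
      (nhds (-2 / ((t : ℝ)⁻¹ + 1))) := tendsto_const_nhds.div hv hvne
  have h2 : Tendsto (fun σ0 : ℝ => (y t - postMean y σ0 t) ^ 2 / (postVar σ0 t + 1) ^ 2) atTop
      (nhds ((y t - (t : ℝ)⁻¹ * ∑ i ∈ Finset.range t, y i) ^ 2 / ((t : ℝ)⁻¹ + 1) ^ 2)) :=
    ((tendsto_const_nhds.sub hpm).pow 2).div (hv.pow 2) (pow_ne_zero _ hvne)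
  have := h1.add h2
  simp only [preqTerm, hyvGauss, Nat.add_sub_cancel]
  convert this using 2 <;> field_simp

noncomputable def limTerm (y : ℕ → ℝ) : ℕ → ℝ
  | 0 => 0
  | (k + 1) => hyvGauss ((∑ i ∈ Finset.range (k + 1), y i) / ((k : ℝ) + 1))
      (1 / ((k : ℝ) + 1) + 1) (y (k + 1))

lemma tendsto_zero (y : ℕ → ℝ) :
    Tendsto (fun σ0 : ℝ => preqTerm y σ0 1) atTop (nhds 0) := by
  have hv : Tendsto (fun σ0 : ℝ => ((σ0 ^ 2)⁻¹)⁻¹ + 1) atTop atTop := by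
    apply tendsto_atTop_add_const_right
    have : ∀ᶠ σ0 : ℝ in atTop, σ0 ^ 2 = ((σ0 ^ 2)⁻¹)⁻¹ := by
      filter_upwards [eventually_gt_atTop 0] with x hx
      rw [inv_inv]
    exact sq_atTop.congr' this
  have h1 : Tendsto (fun σ0 : ℝ => -2 / (((σ0 ^ 2)⁻¹)⁻¹ + 1)) atTop (nhds 0) :=
    tendsto_const_nhds.div_atTop hv
  have h2 : Tendsto (fun σ0 : ℝ => (y 0) ^ 2 / (((σ0 ^ 2)⁻¹)⁻¹ + 1) ^ 2) atTop (nhds 0) :=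
    tendsto_const_nhds.div_atTop ((tendsto_pow_atTop two_ne_zero).comp hv)
  have := h1.add h2
  simp only [preqTerm, hyvGauss, postMean, postVar] at this ⊢
  simpa using this

/-- For the conjugate Normal model, the prequential Hyvärinen score
`H_T = ∑_{t=1}^T H(y_t, N(μ_{t-1}, σ_{t-1}²+1))` converges to a finite limit as
`σ₀ → +∞`; moreover for each `2 ≤ t ≤ T` the `t`-th term converges to the score of
`N(m_{t-1}, 1/(t-1) + 1)` at `y_t`, where `m_{t-1}` is the sample mean of the first
`t-1` observations. -/
theorem preq_hyvScore_stable_vague_prior (T : ℕ) (y : ℕ → ℝ) :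
    (∃ L : ℝ, Tendsto (fun σ0 : ℝ => ∑ t ∈ Finset.range T, preqTerm y σ0 (t + 1))
        atTop (nhds L)) ∧
      ∀ t : ℕ, 2 ≤ t → t ≤ T →
        Tendsto (fun σ0 : ℝ => preqTerm y σ0 t) atTop
          (nhds (hyvGauss ((∑ i ∈ Finset.range (t - 1), y i) / ((t : ℝ) - 1))
            (1 / ((t : ℝ) - 1) + 1) (y (t - 1)))) := by
  constructor
  · refine ⟨∑ t ∈ Finset.range T, limTerm y t, tendsto_finset_sum _ fun t _ => ?_⟩
    match t with
    | 0 => simpa [limTerm] using tendsto_zero y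
    | (k + 1) => simpa [limTerm] using tendsto_main y (k + 1) (by omega)
  · intro t h2 hT
    obtain ⟨k, rfl⟩ : ∃ k, t = k + 1 := ⟨t - 1, by omega⟩
    have := tendsto_main y k (by omega)
    simpa using this
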